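/- arXiv:1211.0606 — 6 statements merged into one kernel-verified Lean document; each statement's English description precedes it below -/
import Mathlib

section
/- D is regularly immune: D is an infinite language, and for every DFA A over the alphabet Bool with finite state set, if the language L(A) accepted by A is contained in D, then L(A) is finite. (Equivalently, D contains no infinite regular language.) -/
/-- The morphism β with β(0)=01, β(1)=10, extended to words. -/
def beta (x : List Bool) : List Bool := x.flatMap (fun b => [b, !b])

/-- The map ex : x ↦ β(x)·11·0^(|x|²+3)·β(x)·11·0^(|x|²+3). -/
def ex (x : List Bool) : List Bool :=
  beta x ++ [true, true] ++ List.replicate (x.length ^ 2 + 3) false ++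
  beta x ++ [true, true] ++ List.replicate (x.length ^ 2 + 3) false

/-- D is the image of ex. -/
def D : Set (List Bool) := Set.range ex

def flen (n : ℕ) : ℕ := 2 * n ^ 2 + 4 * n + 10

lemma beta_len (x : List Bool) : (beta x).length = 2 * x.length := by
  induction x with
  | nil => simp [beta]
  | cons a t ih => simp [beta] at ih ⊢; omega

lemma ex_len (x : List Bool) : (ex x).length = flen x.length := by
  simp [ex, flen, beta_len]; ring

lemma flen_mono : StrictMono flen := by
  intro a b h; simp only [flen]; nlinarith

lemma mem_D_len {w : List Bool} (h : w ∈ D) : ∃ n, w.length = flen n := by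
  obtain ⟨x, rfl⟩ := h; exact ⟨x.length, ex_len x⟩

lemma join_replicate_len (k : ℕ) (b : List Bool) :
    ((List.replicate k b).flatten).length = k * b.length := by
  induction k with
  | zero => simp
  | succ n ih => simp [List.replicate_succ, ih]; ring

/-- D is regularly immune: D is infinite, and every regular language contained
in D is finite. -/
theorem stmt_1 :
    D.Infinite ∧
    ∀ (Q : Type) [Fintype Q] (A : DFA Bool Q),
      (∀ w ∈ A.accepts, w ∈ D) → (A.accepts : Set (List Bool)).Finite := by
  constructor
  · apply Set.infinite_of_injective_forall_mem
      (f := fun n : ℕ => ex (List.replicate n false))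
    case hi =>
      intro m n h
      have := congrArg List.length h
      rw [ex_len, ex_len] at this
      simpa using flen_mono.injective (by simpa using this)
    case hf => intro n; exact ⟨_, rfl⟩
  · intro Q _ A hsub
    by_contra hinf
    -- find a long word in accepts
    have hlong : ∃ x ∈ A.accepts, Fintype.card Q ≤ x.length := by
      by_contra hno
      push_neg at hno
      exact hinf ((List.finite_length_lt Bool (Fintype.card Q)).subset
        (fun x hx => by exact hno x hx))
    obtain ⟨x, hx, hxlen⟩ := hlong
    obtain ⟨a, b, c, hdecomp, hablen, hbne, hpump⟩ := A.pumping_lemma hx hxlen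
    have hw : ∀ k : ℕ, (a ++ (List.replicate k b).flatten ++ c) ∈ A.accepts := by
      intro k
      apply hpump
      exact Language.append_mem_mul
        (Language.append_mem_mul rfl (Language.join_mem_kstar (fun y hy => by rw [List.eq_of_mem_replicate hy]; rfl)))
        rfl
    have hlen : ∀ k : ℕ, ∃ n, a.length + c.length + k * b.length = flen n := by
      intro k
      obtain ⟨n, hn⟩ := mem_D_len (hsub _ (hw k))
      refine ⟨n, ?_⟩
      simp [join_replicate_len] at hn
      omega
    choose n hn using hlen
    set d := b.length with hd
    have hd1 : 1 ≤ d := by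
      cases b with
      | nil => exact absurd rfl hbne
      | cons _ _ => simp [hd]
    set K := flen d + 1 with hK
    have hK1 : flen d < flen (n K) := by
      have h1 := hn K
      have : K ≤ K * d := Nat.le_mul_of_pos_right K hd1
      omega
    have hnKd : d < n K := flen_mono.lt_iff_lt.mp hK1
    have hstep : flen (n (K + 1)) = flen (n K) + d := by
      have h1 := hn K
      have h2 := hn (K + 1)
      have : (K + 1) * d = K * d + d := by ring
      omega
    have hsucc : flen (n K + 1) = flen (n K) + 4 * n K + 6 := by
      simp only [flen]; ring
    have h1 : n K < n (K + 1) := by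
      apply flen_mono.lt_iff_lt.mp; omega
    have h2 : n (K + 1) < n K + 1 := by
      apply flen_mono.lt_iff_lt.mp; omega
    omega
end

section
/- If β(x)·11 is a prefix of ex(y) for binary words x and y, then x = y. (The first occurrence of 11 starting at an even position in a word of D signals that the prefix β(x) is completed and determines the word uniquely.) -/
lemma beta_nil : beta [] = [] := rfl

lemma beta_cons (a : Bool) (x : List Bool) : beta (a :: x) = a :: (!a) :: beta x := rfl

lemma key (x : List Bool) : ∀ y rest : List Bool,
    (beta x ++ [true, true]) <+: (beta y ++ [true, true] ++ false :: rest) → x = y := by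
  induction x with
  | nil =>
    intro y rest h
    cases y with
    | nil => rfl
    | cons b y' =>
      simp only [beta_nil, beta_cons, List.nil_append, List.cons_append,
        List.cons_prefix_cons] at h
      obtain ⟨hb, h2, -⟩ := h
      subst hb; simp at h2
  | cons a x' ih =>
    intro y rest h
    cases y with
    | nil =>
      simp only [beta_nil, beta_cons, List.nil_append, List.cons_append,
        List.cons_prefix_cons] at h
      obtain ⟨hb, h2, -⟩ := h
      subst hb; simp at h2
    | cons b y' =>
      simp only [beta_cons, List.cons_append, List.cons_prefix_cons] at h
      obtain ⟨hb, -, h3⟩ := h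
      subst hb
      exact congrArg (a :: ·) (ih y' rest h3)

/-- If β(x)·11 is a prefix of ex(y), then x = y. -/
theorem stmt_3 (x y : List Bool) (h : (beta x ++ [true, true]) <+: ex y) :
    x = y := by
  apply key x y
  have : ex y = beta y ++ [true, true] ++ false ::
      (List.replicate (y.length ^ 2 + 2) false ++
        beta y ++ [true, true] ++ List.replicate (y.length ^ 2 + 3) false) := by
    simp [ex, List.replicate_succ]
  rwa [this] at h
end

section
/- Let A be a DFA over the alphabet Bool with start state s, extended transition function δ, and accepting set F. Suppose every word accepted by A is a square. Then for every state q, every accepting state t ∈ F, and every k ∈ ℕ, there is at most one word u such that |u| = k, δ(s, u) = q, δ(q, u) = t, and u·u ∈ L(A): if u and v both satisfy these conditions, then u = v. -/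
/-- If all accepted words are squares, then a square u·u ∈ L(A) is determined by
the middle state, the final (accepting) state and the length of u. -/
theorem stmt_9 (Q : Type) (A : DFA Bool Q)
    (hsq : ∀ w ∈ A.accepts, ∃ u : List Bool, w = u ++ u)
    (q : Q) (t : Q) (ht : t ∈ A.accept) (k : ℕ) (u v : List Bool)
    (hu : u.length = k ∧ A.eval u = q ∧ A.evalFrom q u = t ∧ u ++ u ∈ A.accepts)
    (hv : v.length = k ∧ A.eval v = q ∧ A.evalFrom q v = t ∧ v ++ v ∈ A.accepts) :
    u = v := by
  obtain ⟨hul, huq, hut, -⟩ := hu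
  obtain ⟨hvl, hvq, hvt, -⟩ := hv
  have hacc : u ++ v ∈ A.accepts := by
    show A.evalFrom A.start (u ++ v) ∈ A.accept
    rw [DFA.evalFrom_of_append]
    have : A.evalFrom A.start u = q := huq
    rw [this, hvt]; exact ht
  obtain ⟨z, hz⟩ := hsq _ hacc
  have hlen : u.length = z.length := by
    have := congrArg List.length hz
    simp at this; omega
  obtain ⟨h1, h2⟩ := List.append_inj hz hlen
  rw [h1, h2]
end

section
/- Let A be a DFA over the alphabet Bool with finite state set Q. If the accepted language L(A) is finite and every word of L(A) is a square, then 2·|L(A)| ≤ (|Q| + 1)·|Q|^2 (in particular |L(A)| ≤ |Q|^3). -/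
/-!
Pumping shows that every word of a finite language accepted by an `n`-state DFA has length
less than `n`. A square `u ++ u` of the language is determined by the state reached after `u`
together with `|u|`: if `|u| = |v|` and `u`, `v` lead to the same state, then `u ++ v` is accepted
as well, and a square whose two halves have equal length forces `u = v`. Hence the language has
at most `n * ⌈n / 2⌉` words.
-/

namespace DFA

variable {α σ : Type*} (M : DFA α σ)

theorem length_lt_card_of_mem_accepts [Fintype σ] (hfin : (M.accepts : Set (List α)).Finite)
    {w : List α} (hw : w ∈ M.accepts) : w.length < Fintype.card σ := by
  by_contra! hlen
  obtain ⟨a, b, c, -, -, hb, hpump⟩ := M.pumping_lemma hw hlen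
  refine hfin.not_infinite (Set.infinite_of_injective_forall_mem
    (f := fun n : ℕ => a ++ (List.replicate n b).flatten ++ c) ?_ fun n => hpump ?_)
  · intro m n hmn
    have hlen := congrArg List.length hmn
    simp only [List.length_append, List.length_flatten, List.map_replicate,
      List.sum_replicate, smul_eq_mul] at hlen
    exact Nat.eq_of_mul_eq_mul_right (List.length_pos_iff.mpr hb) (by omega)
  · refine Language.append_mem_mul (Language.append_mem_mul rfl ?_) rfl
    exact Language.join_mem_kstar fun y hy => by rw [List.eq_of_mem_replicate hy]; rfl

theorem eq_of_eval_eq_of_forall_square (hsq : ∀ w ∈ M.accepts, ∃ x, w = x ++ x)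
    {u v : List α} (hv : v ++ v ∈ M.accepts) (hlen : u.length = v.length)
    (heval : M.eval u = M.eval v) : u = v := by
  have huv : u ++ v ∈ M.accepts := by
    rwa [mem_accepts, eval, evalFrom_of_append, ← eval, heval, eval, ← evalFrom_of_append]
  obtain ⟨x, hx⟩ := hsq _ huv
  have hux : u.length = x.length := by
    have := congrArg List.length hx
    simp only [List.length_append] at this
    omega
  obtain ⟨rfl, rfl⟩ := List.append_inj hx hux
  rfl

theorem ncard_accepts_le_of_forall_square [Fintype σ] (hfin : (M.accepts : Set (List α)).Finite)
    (hsq : ∀ w ∈ M.accepts, ∃ x, w = x ++ x) :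
    (M.accepts : Set (List α)).ncard ≤ Fintype.card σ * ((Fintype.card σ + 1) / 2) := by
  have half_length (u : List α) : (u ++ u).length / 2 = u.length := by
    simp only [List.length_append]; omega
  calc (M.accepts : Set (List α)).ncard
      ≤ ((Finset.univ ×ˢ Finset.range ((Fintype.card σ + 1) / 2) : Finset (σ × ℕ)) :
          Set (σ × ℕ)).ncard :=
        Set.ncard_le_ncard_of_injOn (fun w => (M.eval (w.take (w.length / 2)), w.length / 2))
          ?_ ?_
    _ = Fintype.card σ * ((Fintype.card σ + 1) / 2) := by simp
  · intro w hw
    have hlt := M.length_lt_card_of_mem_accepts hfin hw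
    obtain ⟨u, rfl⟩ := hsq w hw
    simp only [half_length, Finset.coe_product, Finset.coe_univ, Finset.coe_range,
      Set.mem_prod, Set.mem_univ, Set.mem_Iio, true_and]
    simp only [List.length_append] at hlt
    omega
  · rintro w hw w' hw' heq
    obtain ⟨u, rfl⟩ := hsq w hw
    obtain ⟨v, rfl⟩ := hsq w' hw'
    simp only [half_length, List.take_left, Prod.mk.injEq] at heq
    rw [M.eq_of_eval_eq_of_forall_square hsq hw' heq.2 heq.1]

end DFA

/-- A finite regular language of squares has cardinality at most |Q|³/2. -/
theorem stmt_10 (Q : Type) [Fintype Q] (A : DFA Bool Q)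
    (hfin : (A.accepts : Set (List Bool)).Finite)
    (hsq : ∀ w ∈ A.accepts, ∃ u : List Bool, w = u ++ u) :
    2 * (A.accepts : Set (List Bool)).ncard ≤
      (Fintype.card Q + 1) * Fintype.card Q ^ 2 := by
  set n := Fintype.card Q
  calc 2 * (A.accepts : Set (List Bool)).ncard ≤ 2 * (n * ((n + 1) / 2)) :=
        Nat.mul_le_mul_left 2 (A.ncard_accepts_le_of_forall_square hfin hsq)
    _ ≤ (n + 1) * n := by
        rw [mul_left_comm, mul_comm n]
        exact Nat.mul_le_mul_right n (Nat.mul_div_le (n + 1) 2)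
    _ ≤ (n + 1) * n ^ 2 := Nat.mul_le_mul_left (n + 1) (Nat.le_self_pow two_ne_zero n)
end

section
/- Let A be a DFA over the alphabet Bool with finite state set Q such that L(A) ⊆ 𝔇. Then the D-prefix set R_D = {w ∈ D : ∃v, w·v ∈ L(A)} is finite, and its cardinality satisfies |R_D| ≤ 2·|Q|^3. -/
/-- 𝔇 is the set of all extensions of words of D. -/
def Dext : Set (List Bool) := {w | ∃ u ∈ D, ∃ v : List Bool, w = u ++ v}

/-!
If two words x, x' with ex x, ex x' prefixes of accepted words drive A to the same state after
β(x)·11 and β(x')·11, then β(x)·11·0^(|x'|²+3)·β(x')·11·… is accepted too, so it starts with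
some ex z. Since the words β(z)·11 form a prefix code, z = x, and the zero blocks 0^(|x|²+3) and
0^(|x'|²+3) must then agree up to the at most one leading 0 of β(x)·11, which forces x = x'.
Hence x ↦ δ(s, β(x)·11) is injective on the relevant x, and |R_D| ≤ |Q| ≤ 2|Q|³.
-/

def exHead (x : List Bool) : List Bool := beta x ++ [true, true]

def exZeros (x : List Bool) : List Bool := List.replicate (x.length ^ 2 + 3) false

lemma ex_eq (x : List Bool) : ex x = exHead x ++ exZeros x ++ exHead x ++ exZeros x := by
  simp [ex, exHead, exZeros]

theorem exHead_append_inj {x u r s : List Bool} (h : exHead x ++ r = exHead u ++ s) :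
    x = u ∧ r = s := by
  induction x generalizing u with
  | nil =>
    cases u with
    | nil => simpa [exHead, beta] using h
    | cons b u => cases b <;> simp [exHead, beta] at h
  | cons a x ih =>
    cases u with
    | nil => cases a <;> simp [exHead, beta] at h
    | cons b u =>
      simp only [exHead, beta_cons, List.cons_append, List.cons.injEq] at h
      obtain ⟨rfl, -, h⟩ := h
      exact ⟨congrArg _ (ih h).1, (ih h).2⟩

lemma exists_getElem?_exHead_append_eq_true (x r : List Bool) :
    ∃ j ≤ min 1 (2 * x.length), (exHead x ++ r)[j]? = some true := by
  rcases x with _ | ⟨_ | _, x⟩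
  · exact ⟨0, by simp, by simp [exHead, beta]⟩
  · exact ⟨1, by simp; omega, by simp [exHead, beta_cons]⟩
  · exact ⟨0, by simp, by simp [exHead, beta_cons]⟩

lemma le_add_of_replicate_false_append_eq {m m' j : ℕ} {l l' : List Bool}
    (h : List.replicate m false ++ l = List.replicate m' false ++ l')
    (hj : l[j]? = some true) : m' ≤ m + j := by
  by_contra! hlt
  have hl : (List.replicate m false ++ l)[m + j]? = some true := by
    rwa [List.getElem?_append_right (by simp), List.length_replicate, Nat.add_sub_cancel_left]
  rw [h, List.getElem?_append_left (by simpa using hlt), List.getElem?_replicate,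
    if_pos hlt] at hl
  simp at hl

lemma length_le_of_exZeros_append_exHead_eq {x x' r r' : List Bool}
    (h : exZeros x ++ (exHead x ++ r) = exZeros x' ++ (exHead x' ++ r')) :
    x'.length ≤ x.length := by
  obtain ⟨j, hj, hjx⟩ := exists_getElem?_exHead_append_eq_true x r
  have := le_add_of_replicate_false_append_eq h hjx
  by_contra! hlt
  have : x.length ^ 2 + 2 * x.length < x'.length ^ 2 := by nlinarith
  omega

theorem exZeros_append_exHead_inj {x x' r r' : List Bool}
    (h : exZeros x ++ (exHead x ++ r) = exZeros x' ++ (exHead x' ++ r')) : x = x' := by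
  have hlen : x.length = x'.length :=
    le_antisymm (length_le_of_exZeros_append_exHead_eq h.symm)
      (length_le_of_exZeros_append_exHead_eq h)
  rw [exZeros, exZeros, hlen] at h
  exact (exHead_append_inj (List.append_cancel_left h)).1

lemma eq_of_exHead_append_exZeros_append_exHead_mem_Dext {x x' v : List Bool}
    (h : exHead x ++ (exZeros x' ++ (exHead x' ++ v)) ∈ Dext) : x = x' := by
  obtain ⟨_, ⟨z, rfl⟩, t, ht⟩ := h
  rw [ex_eq] at ht
  simp only [List.append_assoc] at ht
  obtain ⟨rfl, ht⟩ := exHead_append_inj ht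
  exact (exZeros_append_exHead_inj ht).symm

lemma DFA.append_mem_accepts_of_eval_eq {α σ : Type*} (A : DFA α σ) {p p' r : List α}
    (hp : A.eval p = A.eval p') (h : p' ++ r ∈ A.accepts) : p ++ r ∈ A.accepts := by
  rwa [DFA.mem_accepts, DFA.eval, DFA.evalFrom_of_append, ← DFA.eval, hp, DFA.eval,
    ← DFA.evalFrom_of_append]

theorem injOn_eval_exHead {Q : Type} (A : DFA Bool Q) (hL : ∀ w ∈ A.accepts, w ∈ Dext) :
    Set.InjOn (fun x => A.eval (exHead x)) {x | ∃ v, ex x ++ v ∈ A.accepts} := by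
  rintro x - x' ⟨v, hv⟩ hxx'
  apply eq_of_exHead_append_exZeros_append_exHead_mem_Dext (v := exZeros x' ++ v)
  apply hL
  apply A.append_mem_accepts_of_eval_eq hxx'
  simpa [ex_eq] using hv

/-- If L(A) ⊆ 𝔇 then the D-prefix set R_D is finite of cardinality ≤ 2|Q|³. -/
theorem stmt_13 (Q : Type) [Fintype Q] (A : DFA Bool Q)
    (hL : ∀ w ∈ A.accepts, w ∈ Dext) :
    ({w | w ∈ D ∧ ∃ v : List Bool, w ++ v ∈ A.accepts} : Set (List Bool)).Finite ∧
      ({w | w ∈ D ∧ ∃ v : List Bool, w ++ v ∈ A.accepts} : Set (List Bool)).ncard ≤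
        2 * Fintype.card Q ^ 3 := by
  set X : Set (List Bool) := {x | ∃ v, ex x ++ v ∈ A.accepts}
  have hRD : {w | w ∈ D ∧ ∃ v : List Bool, w ++ v ∈ A.accepts} = ex '' X := by
    ext w
    constructor
    · rintro ⟨⟨x, rfl⟩, hv⟩
      exact ⟨x, hv, rfl⟩
    · rintro ⟨x, hv, rfl⟩
      exact ⟨⟨x, rfl⟩, hv⟩
  have hinj := injOn_eval_exHead A hL
  have hX : X.Finite := Set.Finite.of_finite_image (Set.toFinite _) hinj
  have hXcard : X.ncard ≤ Fintype.card Q := by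
    simpa [Nat.card_eq_fintype_card] using
      Set.ncard_le_ncard_of_injOn _ (fun _ _ => Set.mem_univ _) hinj Set.finite_univ
  rw [hRD]
  refine ⟨hX.image ex, ?_⟩
  calc (ex '' X).ncard ≤ X.ncard := Set.ncard_image_le hX
    _ ≤ Fintype.card Q := hXcard
    _ ≤ 2 * Fintype.card Q ^ 3 :=
      (Nat.le_self_pow (by norm_num) _).trans (Nat.le_mul_of_pos_left _ (by norm_num))
end

section
/- The map φ sending a pair (x, y), where x is a binary word and y is a nonempty binary word with first symbol a ∈ {0,1} and tail t (so y = a·t), to the word β(x)·a·a·t, is injective: if β(x₁)·a·a·t₁ = β(x₂)·b·b·t₂ (with a, b single symbols), then x₁ = x₂, a = b, and t₁ = t₂. -/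
/-- The map (x, a·t) ↦ β(x)·a·a·t is injective. -/
theorem stmt_16 (x₁ x₂ : List Bool) (a b : Bool) (t₁ t₂ : List Bool)
    (h : beta x₁ ++ [a, a] ++ t₁ = beta x₂ ++ [b, b] ++ t₂) :
    x₁ = x₂ ∧ a = b ∧ t₁ = t₂ := by
  induction x₁ generalizing x₂ with
  | nil =>
    cases x₂ with
    | nil => simp_all [beta]
    | cons c x =>
      simp only [beta, List.flatMap_cons, List.flatMap_nil] at h
      simp at h
      obtain ⟨rfl, h2, _⟩ := h
      simp at h2
  | cons c x ih =>
    cases x₂ with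
    | nil =>
      simp only [beta, List.flatMap_cons, List.flatMap_nil] at h
      simp at h
      obtain ⟨rfl, h2, _⟩ := h
      simp at h2
    | cons d y =>
      have hb : ∀ z c, beta (c :: z) = c :: (!c) :: beta z := by
        intro z c; simp [beta]
      rw [hb, hb] at h
      simp only [List.cons_append, List.cons.injEq] at h
      obtain ⟨rfl, _, h3⟩ := h
      obtain ⟨h1, h2, h4⟩ := ih y h3
      exact ⟨by rw [h1], h2, h4⟩
end
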